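/- Let f₁,…,fₙ : ℝ^d → ℝ be differentiable and f = (1/n)∑_{i=1}^n fᵢ. Fix x, x̃_old ∈ ℝ^d and a positive integer m. For a point x̃ ∈ ℝ^d and a random batch I = (i₁,…,i_b), define the SVRG error err(I, x̃) = ‖(1/b)∑_{j=1}^b (∇f_{i_j}(x) − ∇f_{i_j}(x̃)) + ∇f(x̃) − ∇f(x)‖². Then (1/m)·E_I[err(I, x)] + (1 − 1/m)·E_I[err(I, x̃_old)] ≤ (1 − 1/m)·(1/(bn))∑_{i=1}^n ‖∇fᵢ(x) − ∇fᵢ(x̃_old)‖², where E_I denotes expectation over the random batch. (This is the loop-less SVRG estimator error bound: the pivot x̃ equals x with probability 1/m and x̃_old otherwise, and err(I, x) = 0.) -/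

import Mathlib

/-!
Write `gᵢ = ∇fᵢ(x) − ∇fᵢ(x̃_old)` and `μ` for their mean. The pivot `x̃ = x` contributes nothing,
and `err(I, x̃_old) = ‖(1/b) ∑ⱼ (g_{iⱼ} − μ)‖²`. Expanding the square, the cross terms of distinct
batch positions vanish on average, since the indices are independent and the centred vectors
`gᵢ − μ` sum to zero. So the expectation is `1/b` times the variance
`(1/n) ∑ᵢ ‖gᵢ − μ‖² = (1/n) ∑ᵢ ‖gᵢ‖² − ‖μ‖²`.
-/

open Finset
open scoped RealInnerProductSpace

theorem gradient_const_mul_sum {F : Type*} [NormedAddCommGroup F] [InnerProductSpace ℝ F]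
    [CompleteSpace F] {ι : Type*} [Fintype ι] {f : ι → F → ℝ} {x : F}
    (hf : ∀ i, DifferentiableAt ℝ (f i) x) (c : ℝ) :
    gradient (fun w => c * ∑ i, f i w) x = c • ∑ i, gradient (f i) x := by
  simp only [gradient, fderiv_const_mul (DifferentiableAt.fun_sum fun i _ => hf i),
    fderiv_fun_sum fun i _ => hf i, map_smul, map_sum]

section SampleMean

variable {E : Type*} [NormedAddCommGroup E] [InnerProductSpace ℝ E] {α : Type*} [Fintype α]

theorem sum_pi_norm_sq_sum_of_sum_eq_zero {h : α → E} (hh : ∑ a, h a = 0) (b : ℕ) :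
    ∑ I : Fin b → α, ‖∑ j, h (I j)‖ ^ 2 =
      b * Fintype.card α ^ (b - 1) * ∑ a, ‖h a‖ ^ 2 := by
  induction b with
  | zero => simp
  | succ b ih =>
    have cross : ∑ a, ∑ I : Fin b → α, ⟪h a, ∑ j, h (I j)⟫ = 0 := by
      simp_rw [← inner_sum]
      rw [← sum_inner, hh, inner_zero_left]
    rw [← (Fin.consEquiv fun _ => α).sum_comp, Fintype.sum_prod_type]
    simp only [Fin.consEquiv_apply, Fin.sum_univ_succ, Fin.cons_zero, Fin.cons_succ,
      norm_add_sq_real, sum_add_distrib, ← mul_sum, cross, sum_const, card_univ,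
      Fintype.card_fun, Fintype.card_fin, nsmul_eq_mul, ih]
    rcases b with _ | b
    · simp
    · push_cast; ring

theorem sum_norm_sq_sub_eq_of_sum_eq_card_smul {g : α → E} {μ : E}
    (hμ : ∑ a, g a = (Fintype.card α : ℝ) • μ) :
    ∑ a, ‖g a - μ‖ ^ 2 = ∑ a, ‖g a‖ ^ 2 - Fintype.card α * ‖μ‖ ^ 2 := by
  simp only [norm_sub_sq_real, sum_add_distrib, sum_sub_distrib, ← mul_sum, ← sum_inner, hμ,
    real_inner_smul_left, real_inner_self_eq_norm_sq, sum_const, card_univ, nsmul_eq_mul]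
  ring

theorem expect_norm_sq_sampleMean_sub_mean_le {b : ℕ} (hb : b ≠ 0) (g : α → E) :
    1 / (Fintype.card α : ℝ) ^ b * ∑ I : Fin b → α,
        ‖(1 / (b : ℝ)) • ∑ j, g (I j) - (1 / (Fintype.card α : ℝ)) • ∑ a, g a‖ ^ 2 ≤
      1 / (b * Fintype.card α) * ∑ a, ‖g a‖ ^ 2 := by
  rcases isEmpty_or_nonempty α with hα | hα
  · simp [zero_pow hb]
  set μ : E := (1 / (Fintype.card α : ℝ)) • ∑ a, g a
  have hn : (Fintype.card α : ℝ) ≠ 0 := by simp [Fintype.card_ne_zero]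
  have hb' : (b : ℝ) ≠ 0 := by exact_mod_cast hb
  have hgμ : ∑ a, g a = (Fintype.card α : ℝ) • μ := by simp [μ, smul_smul, hn]
  have hcentred : ∑ a, (g a - μ) = 0 := by
    rw [sum_sub_distrib, hgμ, sum_const, card_univ, ← Nat.cast_smul_eq_nsmul ℝ, sub_self]
  have hmean (I : Fin b → α) : (1 / (b : ℝ)) • ∑ j, g (I j) - μ =
      (1 / (b : ℝ)) • ∑ j, (g (I j) - μ) := by
    rw [sum_sub_distrib, sum_const, Finset.card_fin, ← Nat.cast_smul_eq_nsmul ℝ,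
      smul_sub, smul_smul, one_div_mul_cancel hb', one_smul]
  simp only [hmean, norm_smul, mul_pow, ← mul_sum, sum_pi_norm_sq_sum_of_sum_eq_zero hcentred,
    sum_norm_sq_sub_eq_of_sum_eq_card_smul hgμ]
  rw [← pow_sub_one_mul hb, Real.norm_of_nonneg (by positivity)]
  calc _ = 1 / (b * Fintype.card α) * (∑ a, ‖g a‖ ^ 2 - Fintype.card α * ‖μ‖ ^ 2) := by
        field_simp
    _ ≤ _ := by
        gcongr
        exact sub_le_self _ (by positivity)

end SampleMean

theorem stmt_2_general (d n b m : ℕ) (hb : 0 < b)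
    (f : Fin n → EuclideanSpace ℝ (Fin d) → ℝ)
    (hf : ∀ i, Differentiable ℝ (f i))
    (F : EuclideanSpace ℝ (Fin d) → ℝ)
    (hF : F = fun w => (1 / (n : ℝ)) * ∑ i, f i w)
    (x xtold : EuclideanSpace ℝ (Fin d))
    (err : (Fin b → Fin n) → EuclideanSpace ℝ (Fin d) → ℝ)
    (herr : ∀ (I : Fin b → Fin n) (xt : EuclideanSpace ℝ (Fin d)),
      err I xt = ‖(1 / (b : ℝ)) • (∑ j, (gradient (f (I j)) x - gradient (f (I j)) xt)) +
          gradient F xt - gradient F x‖ ^ 2) :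
    (1 / (m : ℝ)) * ((1 / (n : ℝ) ^ b) * ∑ I : Fin b → Fin n, err I x) +
        (1 - 1 / (m : ℝ)) * ((1 / (n : ℝ) ^ b) * ∑ I : Fin b → Fin n, err I xtold) ≤
      (1 - 1 / (m : ℝ)) * ((1 / ((b : ℝ) * (n : ℝ))) *
        ∑ i, ‖gradient (f i) x - gradient (f i) xtold‖ ^ 2) := by
  have hgradF (w : EuclideanSpace ℝ (Fin d)) :
      gradient F w = (1 / (n : ℝ)) • ∑ i, gradient (f i) w :=
    hF ▸ gradient_const_mul_sum (fun i => (hf i).differentiableAt) _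
  have herr_x (I : Fin b → Fin n) : err I x = 0 := by simp [herr]
  have herr_xtold (I : Fin b → Fin n) : err I xtold =
      ‖(1 / (b : ℝ)) • ∑ j, (gradient (f (I j)) x - gradient (f (I j)) xtold) -
        (1 / (n : ℝ)) • ∑ i, (gradient (f i) x - gradient (f i) xtold)‖ ^ 2 := by
    simp only [herr, hgradF, sum_sub_distrib, smul_sub]
    congr 2
    abel
  have hweight : 0 ≤ 1 - 1 / (m : ℝ) := by
    rw [sub_nonneg, one_div]
    exact Nat.cast_inv_le_one m
  simp only [herr_x, herr_xtold, sum_const_zero, mul_zero, zero_add]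
  have hvariance := expect_norm_sq_sampleMean_sub_mean_le hb.ne'
    fun i => gradient (f i) x - gradient (f i) xtold
  rw [Fintype.card_fin] at hvariance
  exact mul_le_mul_of_nonneg_left hvariance hweight

/-- Loop-less SVRG estimator error bound.
`f = (1/n) ∑ᵢ fᵢ`; for a pivot `x̃` and a batch `I = (i₁, …, i_b)` of indices drawn independently
and uniformly from `{1, …, n}` (expectation `E_I` = average over all `n^b` tuples), set
`err(I, x̃) = ‖(1/b) ∑ⱼ (∇f_{iⱼ}(x) − ∇f_{iⱼ}(x̃)) + ∇f(x̃) − ∇f(x)‖²`. Then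
`(1/m)·E_I[err(I, x)] + (1 − 1/m)·E_I[err(I, x̃_old)]
  ≤ (1 − 1/m)·(1/(bn)) ∑ᵢ ‖∇fᵢ(x) − ∇fᵢ(x̃_old)‖²`. -/
theorem stmt_2 (d n b m : ℕ) (hn : 0 < n) (hb : 0 < b) (hm : 0 < m)
    (f : Fin n → EuclideanSpace ℝ (Fin d) → ℝ)
    (hf : ∀ i, Differentiable ℝ (f i))
    (F : EuclideanSpace ℝ (Fin d) → ℝ)
    (hF : F = fun w => (1 / (n : ℝ)) * ∑ i, f i w)
    (x xtold : EuclideanSpace ℝ (Fin d))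
    (err : (Fin b → Fin n) → EuclideanSpace ℝ (Fin d) → ℝ)
    (herr : ∀ (I : Fin b → Fin n) (xt : EuclideanSpace ℝ (Fin d)),
      err I xt = ‖(1 / (b : ℝ)) • (∑ j, (gradient (f (I j)) x - gradient (f (I j)) xt)) +
          gradient F xt - gradient F x‖ ^ 2) :
    (1 / (m : ℝ)) * ((1 / (n : ℝ) ^ b) * ∑ I : Fin b → Fin n, err I x) +
        (1 - 1 / (m : ℝ)) * ((1 / (n : ℝ) ^ b) * ∑ I : Fin b → Fin n, err I xtold) ≤
      (1 - 1 / (m : ℝ)) * ((1 / ((b : ℝ) * (n : ℝ))) *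
        ∑ i, ‖gradient (f i) x - gradient (f i) xtold‖ ^ 2) :=
  stmt_2_general d n b m hb f hf F hF x xtold err herr
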